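/- If N and N' are inductively defined by N(0), N(x) → N(s x), and R is inductively defined by R(0,y), R(x,0) → R(s x, 0), R(s s x, y) → R(s x, s y), then for all naturals (elements satisfying N) x and y, R(x, y) holds. -/
import Mathlib

/-- The inductive predicate `N`: `N(0)` and `N(x) → N(s x)`. -/
inductive Npred : ℕ → Prop
  | zero : Npred 0
  | succ {x : ℕ} : Npred x → Npred (x + 1)

/-- The inductive predicate `R`: `R(0,y)`, `R(x,0) → R(s x,0)` and
`R(s s x, y) → R(s x, s y)`. -/
inductive Rpred : ℕ → ℕ → Prop
  | base (y : ℕ) : Rpred 0 y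
  | s0 {x : ℕ} : Rpred x 0 → Rpred (x + 1) 0
  | ss {x y : ℕ} : Rpred (x + 2) y → Rpred (x + 1) (y + 1)

lemma Rpred_all : ∀ y x : ℕ, Rpred x y := by
  intro y
  induction y with
  | zero =>
    intro x
    induction x with
    | zero => exact Rpred.base 0
    | succ n ih => exact Rpred.s0 ih
  | succ y ih =>
    intro x
    cases x with
    | zero => exact Rpred.base _
    | succ n => exact Rpred.ss (ih (n + 2))

/-- The running example: `N(x), N(y) ⊢ R(x, y)`. -/
theorem stmt_19 : ∀ x y : ℕ, Npred x → Npred y → Rpred x y := by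
  intro x y _ _; exact Rpred_all y x
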